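/- For any connected undirected graph G: (1) the decoding information of G equals the compressing information of G: D(G) = H¹(G) − H(G) = C(G); and (2) for every k ≥ 2, D^k(G) = H¹(G) − H^k(G) = C^k(G). -/

import Mathlib

open Finset

open scoped Classical

/-- An encoding tree over a finite vertex set `V`: a rooted tree whose nodes carry
nonempty subsets (markers) of `V`, the root carries `V`, the markers of the children
of any non-leaf node partition the node's marker, every non-leaf node has at least
two children, and leaves carry singletons. -/
structure EncTree (V : Type) [Fintype V] [DecidableEq V] : Type 1 where
  node : Type
  [fin : Fintype node]
  [deq : DecidableEq node]
  root : node
  parent : node → node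
  parent_root : parent root = root
  depth : node → ℕ
  depth_root : depth root = 0
  depth_parent : ∀ a, a ≠ root → depth a = depth (parent a) + 1
  mark : node → Finset V
  mark_root : mark root = Finset.univ
  mark_nonempty : ∀ a, (mark a).Nonempty
  mark_subset : ∀ a, a ≠ root → mark a ⊆ mark (parent a)
  children_partition : ∀ a, (∃ b, b ≠ a ∧ parent b = a) →
    ∀ x ∈ mark a, ∃! b, b ≠ a ∧ parent b = a ∧ x ∈ mark b
  children_two : ∀ a b, b ≠ a → parent b = a → ∃ c, c ≠ a ∧ c ≠ b ∧ parent c = a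
  leaf_singleton : ∀ a, (∀ b, b ≠ a → parent b ≠ a) → (mark a).card = 1

attribute [instance] EncTree.fin EncTree.deq

namespace SiLeM

variable {V : Type} [Fintype V] [DecidableEq V]

/-- A node of an encoding tree is a leaf if it has no children. -/
def IsLeaf (T : EncTree V) (a : T.node) : Prop :=
  ∀ b, b ≠ a → T.parent b ≠ a

/-- Volume of a set of vertices: total degree. -/
noncomputable def vol (G : SimpleGraph V) (A : Finset V) : ℝ :=
  ∑ v ∈ A, (G.degree v : ℝ)

/-- Volume of the graph: total degree of all vertices. -/
noncomputable def volG (G : SimpleGraph V) : ℝ := ∑ v : V, (G.degree v : ℝ)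

/-- `g_A`: the number of edges with exactly one endpoint in `A`
(counted as ordered pairs entering `A`). -/
noncomputable def ecut (G : SimpleGraph V) (A : Finset V) : ℝ :=
  ((Finset.univ.filter
      (fun p : V × V => G.Adj p.1 p.2 ∧ p.1 ∉ A ∧ p.2 ∈ A)).card : ℝ)

/-- Structural entropy of `G` given by the encoding tree `T`. -/
noncomputable def HT (G : SimpleGraph V) (T : EncTree V) : ℝ :=
  -∑ a ∈ Finset.univ.filter (fun a : T.node => a ≠ T.root),
      (ecut G (T.mark a) / volG G) *
        Real.logb 2 (vol G (T.mark a) / vol G (T.mark (T.parent a)))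

/-- One-dimensional structural entropy: Shannon entropy of the degree distribution. -/
noncomputable def H1 (G : SimpleGraph V) : ℝ :=
  -∑ v : V, ((G.degree v : ℝ) / volG G) * Real.logb 2 ((G.degree v : ℝ) / volG G)

/-- Compressing information of `G` given by the encoding tree `T`. -/
noncomputable def CT (G : SimpleGraph V) (T : EncTree V) : ℝ :=
  -∑ a ∈ Finset.univ.filter (fun a : T.node => a ≠ T.root),
      ((vol G (T.mark a) - ecut G (T.mark a)) / volG G) *
        Real.logb 2 (vol G (T.mark a) / vol G (T.mark (T.parent a)))

/-- Structural entropy of `G`: minimum over all encoding trees. -/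
noncomputable def SE (G : SimpleGraph V) : ℝ :=
  sInf {x | ∃ T : EncTree V, x = HT G T}

/-- `k`-dimensional structural entropy: minimum over encoding trees of height ≤ k. -/
noncomputable def SEk (G : SimpleGraph V) (k : ℕ) : ℝ :=
  sInf {x | ∃ T : EncTree V, (∀ a, T.depth a ≤ k) ∧ x = HT G T}

/-- Compressing information of `G`: maximum over all encoding trees. -/
noncomputable def CInfo (G : SimpleGraph V) : ℝ :=
  sSup {x | ∃ T : EncTree V, x = CT G T}

/-- `k`-dimensional compressing information. -/
noncomputable def Ck (G : SimpleGraph V) (k : ℕ) : ℝ :=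
  sSup {x | ∃ T : EncTree V, (∀ a, T.depth a ≤ k) ∧ x = CT G T}

/-- Decoding information of `G`. -/
noncomputable def DInfo (G : SimpleGraph V) : ℝ :=
  sSup {x | ∃ T : EncTree V, x = H1 G - HT G T}

/-- `k`-dimensional decoding information. -/
noncomputable def Dk (G : SimpleGraph V) (k : ℕ) : ℝ :=
  sSup {x | ∃ T : EncTree V, (∀ a, T.depth a ≤ k) ∧ x = H1 G - HT G T}

/-- Conductance of a subset `S`. -/
noncomputable def condS (G : SimpleGraph V) (S : Finset V) : ℝ :=
  ecut G S / min (vol G S) (vol G Sᶜ)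

/-- Conductance of the graph. -/
noncomputable def conductance (G : SimpleGraph V) : ℝ :=
  sInf {x | ∃ S : Finset V, S.Nonempty ∧ S ≠ Finset.univ ∧ x = condS G S}

/-- `H̃(Y = β | X = α)` for an edge `(x, y)` with codewords `α, β`: the sum is over
the nodes `δ` with `γ ⊂ δ ⊆ β` where `γ` is the longest common initial segment of
`α` and `β`; these are exactly the nodes whose marker contains `y` but not `x`. -/
noncomputable def Htilde (G : SimpleGraph V) (T : EncTree V) (x y : V) : ℝ :=
  -∑ a ∈ Finset.univ.filter (fun a : T.node => y ∈ T.mark a ∧ x ∉ T.mark a),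
      Real.logb 2 (vol G (T.mark a) / vol G (T.mark (T.parent a)))

/-- `Ĩ(X = α; Y = β)` for an edge `(x, y)`: the sum over the nodes `δ` with
`λ ⊂ δ ⊆ γ`, i.e. the non-root nodes whose marker contains both `x` and `y`. -/
noncomputable def Itilde (G : SimpleGraph V) (T : EncTree V) (x y : V) : ℝ :=
  -∑ a ∈ Finset.univ.filter
      (fun a : T.node => a ≠ T.root ∧ x ∈ T.mark a ∧ y ∈ T.mark a),
      Real.logb 2 (vol G (T.mark a) / vol G (T.mark (T.parent a)))

end SiLeM

/-!
Adding the summands of `H^T(G)` and `C^T(G)` node by node leaves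
`-∑_{α ≠ λ} (V_α / V_λ) log₂ (V_α / V_{α⁻})`. Distributing `V_α` over the vertices of `α`, a
vertex `v` contributes `d_v` times the sum of `log₂ (V_α / V_{α⁻})` along the path from the
root to the leaf `{v}`, which telescopes to `log₂ (d_v / V_λ)`. Hence `H^T(G) + C^T(G) = H¹(G)`
for every encoding tree `T`, so minimizing `H^T`, maximizing `D^T = H¹ - H^T` and maximizing
`C^T` are the same optimization problem, whatever the bound on the height of `T`.
-/

namespace EncTree

variable {V : Type} [Fintype V] [DecidableEq V]

section Paths

variable (T : EncTree V)

lemma eq_root_of_depth_eq_zero {a : T.node} (h : T.depth a = 0) : a = T.root := by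
  by_contra ha
  rw [T.depth_parent a ha] at h
  omega

lemma parent_ne_self {a : T.node} (ha : a ≠ T.root) : T.parent a ≠ a := by
  intro h
  have := T.depth_parent a ha
  rw [h] at this
  omega

lemma mark_subset_mark_parent (a : T.node) : T.mark a ⊆ T.mark (T.parent a) := by
  by_cases ha : a = T.root
  · rw [ha, T.parent_root]
  · exact T.mark_subset a ha

lemma mark_subset_mark_iterate_parent (a : T.node) (i : ℕ) :
    T.mark a ⊆ T.mark (T.parent^[i] a) := by
  induction i with
  | zero => exact subset_rfl
  | succ i ih =>
    rw [Function.iterate_succ_apply']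
    exact ih.trans (T.mark_subset_mark_parent _)

lemma depth_iterate_parent (a : T.node) (i : ℕ) :
    T.depth (T.parent^[i] a) = T.depth a - i := by
  induction i with
  | zero => rfl
  | succ i ih =>
    rw [Function.iterate_succ_apply']
    by_cases h : T.parent^[i] a = T.root
    · rw [h, T.depth_root] at ih
      rw [h, T.parent_root, T.depth_root]
      omega
    · have := T.depth_parent _ h
      omega

lemma iterate_parent_depth (a : T.node) : T.parent^[T.depth a] a = T.root :=
  T.eq_root_of_depth_eq_zero (by rw [depth_iterate_parent, Nat.sub_self])

lemma injOn_iterate_parent (a : T.node) :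
    Set.InjOn (T.parent^[·] a) (range (T.depth a)) := by
  intro i hi j hj hij
  have := congrArg T.depth hij
  simp only [depth_iterate_parent, coe_range, Set.mem_Iio] at this hi hj
  omega

lemma eq_of_depth_eq_of_mem_mark {v : V} {a b : T.node} (hdepth : T.depth a = T.depth b)
    (ha : v ∈ T.mark a) (hb : v ∈ T.mark b) : a = b := by
  induction hd : T.depth a generalizing a b with
  | zero =>
    rw [T.eq_root_of_depth_eq_zero hd, T.eq_root_of_depth_eq_zero (hdepth.symm.trans hd)]
  | succ d ih =>
    have ha_root : a ≠ T.root := by rintro rfl; rw [T.depth_root] at hd; omega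
    have hb_root : b ≠ T.root := by rintro rfl; rw [T.depth_root] at hdepth; omega
    have hpar : T.parent a = T.parent b := by
      have := T.depth_parent a ha_root
      have := T.depth_parent b hb_root
      exact ih (by omega) (T.mark_subset a ha_root ha) (T.mark_subset b hb_root hb) (by omega)
    obtain ⟨c, -, hc⟩ := T.children_partition (T.parent a)
      ⟨a, (T.parent_ne_self ha_root).symm, rfl⟩ v (T.mark_subset a ha_root ha)
    rw [hc a ⟨(T.parent_ne_self ha_root).symm, rfl, ha⟩,
      hc b ⟨hpar ▸ (T.parent_ne_self hb_root).symm, hpar.symm, hb⟩]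

lemma exists_leaf_path (v : V) : ∃ l, T.mark l = {v} ∧
    univ.filter (fun a => a ≠ T.root ∧ v ∈ T.mark a) =
      (range (T.depth l)).image (T.parent^[·] l) := by
  obtain ⟨l, hl, hmax⟩ := (univ.filter fun a => v ∈ T.mark a).exists_max_image T.depth
    ⟨T.root, by simp [T.mark_root]⟩
  simp only [mem_filter, mem_univ, true_and] at hl hmax
  have hleaf : SiLeM.IsLeaf T l := by
    intro b hb hbl
    obtain ⟨a, ⟨hal, hpa, hva⟩, -⟩ := T.children_partition l ⟨b, hb, hbl⟩ v hl
    have := T.depth_parent a (fun h => hal (by rw [← hpa, h, T.parent_root]))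
    have := hmax a hva
    rw [hpa] at *
    omega
  refine ⟨l, ?_, ?_⟩
  · obtain ⟨w, hw⟩ := card_eq_one.mp (T.leaf_singleton l hleaf)
    rw [hw] at hl ⊢
    rw [mem_singleton.mp hl]
  · ext a
    simp only [mem_filter, mem_univ, true_and, mem_image, mem_range]
    constructor
    · rintro ⟨ha_root, hva⟩
      have hpos : T.depth a ≠ 0 := fun h => ha_root (T.eq_root_of_depth_eq_zero h)
      have hle := hmax a hva
      refine ⟨T.depth l - T.depth a, by omega, T.eq_of_depth_eq_of_mem_mark ?_
        (T.mark_subset_mark_iterate_parent l _ hl) hva⟩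
      rw [depth_iterate_parent]
      omega
    · rintro ⟨i, hi, rfl⟩
      refine ⟨fun h => ?_, T.mark_subset_mark_iterate_parent l i hl⟩
      have := T.depth_iterate_parent l i
      rw [h, T.depth_root] at this
      omega

lemma exists_sum_sub_parent (v : V) (f : T.node → ℝ) : ∃ l, T.mark l = {v} ∧
    ∑ a ∈ univ.filter (fun a => a ≠ T.root ∧ v ∈ T.mark a), (f a - f (T.parent a)) =
      f l - f T.root := by
  obtain ⟨l, hl, hpath⟩ := T.exists_leaf_path v
  refine ⟨l, hl, ?_⟩
  rw [hpath, sum_image (T.injOn_iterate_parent l)]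
  simp_rw [← Function.iterate_succ_apply' T.parent]
  rw [sum_range_sub' (fun i => f (T.parent^[i] l)), Function.iterate_zero_apply,
    iterate_parent_depth]

end Paths

def single (hV : Fintype.card V = 1) : EncTree V where
  node := Unit
  root := ()
  parent := fun _ => ()
  parent_root := rfl
  depth := fun _ => 0
  depth_root := rfl
  depth_parent := fun _ ha => absurd rfl ha
  mark := fun _ => univ
  mark_root := rfl
  mark_nonempty := fun _ => univ_nonempty_iff.mpr (Fintype.card_pos_iff.mp (by omega))
  mark_subset := fun _ _ => subset_rfl
  children_partition := fun _ ⟨_, hb, _⟩ => absurd rfl hb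
  children_two := fun _ _ hb _ => absurd rfl hb
  leaf_singleton := fun _ _ => by rw [card_univ, hV]

def star [Nontrivial V] : EncTree V where
  node := Option V
  root := none
  parent := fun _ => none
  parent_root := rfl
  depth := fun a => if a = none then 0 else 1
  depth_root := rfl
  depth_parent := fun a ha => by simp [ha]
  mark := fun a => a.elim univ ({·})
  mark_root := rfl
  mark_nonempty := fun a => by cases a <;> simp
  mark_subset := fun _ _ => subset_univ _
  children_partition := fun a ⟨_, _, hb⟩ x _ => by
    cases a with
    | some v => cases hb
    | none =>
      refine ⟨some x, ⟨by simp, rfl, by simp⟩, ?_⟩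
      rintro (_ | w) ⟨hw, -, hxw⟩
      · exact absurd rfl hw
      · simp_all
  children_two := fun a b hba hb => by
    cases b with
    | none => exact absurd hb hba
    | some v =>
      obtain ⟨w, hw⟩ := exists_ne v
      exact ⟨some w, by rw [← hb]; simp, by simp [hw], hb⟩
  leaf_singleton := fun a ha => by
    cases a with
    | some v => simp
    | none =>
      obtain ⟨x⟩ := (inferInstance : Nonempty V)
      exact absurd rfl (ha (some x) (by simp))

lemma exists_forall_depth_le_one [Nonempty V] : ∃ T : EncTree V, ∀ a, T.depth a ≤ 1 := by
  rcases subsingleton_or_nontrivial V with hV | hV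
  · exact ⟨single ((Fintype.card_le_one_iff_subsingleton.mpr hV).antisymm Fintype.card_pos),
      fun _ => zero_le_one⟩
  · refine ⟨star, fun a => ?_⟩
    simp only [star]
    split <;> omega

end EncTree

namespace SiLeM

variable {V : Type} [Fintype V] (G : SimpleGraph V)

lemma vol_nonneg (A : Finset V) : 0 ≤ vol G A :=
  sum_nonneg fun _ _ => Nat.cast_nonneg _

lemma vol_mono {A B : Finset V} (h : A ⊆ B) : vol G A ≤ vol G B :=
  sum_le_sum_of_subset_of_nonneg h fun _ _ _ => Nat.cast_nonneg _

lemma degree_le_vol {v : V} {A : Finset V} (hv : v ∈ A) : (G.degree v : ℝ) ≤ vol G A :=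
  single_le_sum (f := fun w => (G.degree w : ℝ)) (fun _ _ => Nat.cast_nonneg _) hv

variable [DecidableEq V]

/-- The factor `d_v` keeps this true when `d_v = 0`, where volumes on the path may vanish and
`logb 2 (0 / 0) = 0` breaks the telescoping. -/
lemma degree_mul_sum_logb_vol_div (T : EncTree V) (v : V) :
    (G.degree v : ℝ) * ∑ a ∈ univ.filter (fun a => a ≠ T.root ∧ v ∈ T.mark a),
        Real.logb 2 (vol G (T.mark a) / vol G (T.mark (T.parent a))) =
      G.degree v * Real.logb 2 (G.degree v / volG G) := by
  rcases (Nat.cast_nonneg (α := ℝ) (G.degree v)).eq_or_lt' with hv | hv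
  · rw [hv, zero_mul, zero_mul]
  obtain ⟨l, hl, htel⟩ := T.exists_sum_sub_parent v (fun a => Real.logb 2 (vol G (T.mark a)))
  have hpos {A : Finset V} (hA : v ∈ A) : vol G A ≠ 0 := (hv.trans_le (degree_le_vol G hA)).ne'
  congr 1
  rw [sum_congr rfl fun a ha => Real.logb_div (hpos (mem_filter.mp ha).2.2)
    (hpos (T.mark_subset_mark_parent a (mem_filter.mp ha).2.2)), htel, hl, T.mark_root, vol,
    sum_singleton, ← Real.logb_div hv.ne' (hpos (mem_univ v))]
  rfl

lemma sum_vol_mul_logb_vol_div (T : EncTree V) :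
    ∑ a ∈ univ.filter (· ≠ T.root),
        vol G (T.mark a) * Real.logb 2 (vol G (T.mark a) / vol G (T.mark (T.parent a))) =
      ∑ v, (G.degree v : ℝ) * Real.logb 2 (G.degree v / volG G) := by
  simp_rw [← degree_mul_sum_logb_vol_div G T, vol, sum_mul, mul_sum]
  exact sum_comm' (by simp)

theorem H1_eq_HT_add_CT (T : EncTree V) : H1 G = HT G T + CT G T := by
  have hsum : HT G T + CT G T = -(∑ a ∈ univ.filter (· ≠ T.root),
      vol G (T.mark a) * Real.logb 2 (vol G (T.mark a) / vol G (T.mark (T.parent a)))) / volG G := by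
    rw [HT, CT, ← neg_add, ← sum_add_distrib, neg_div, sum_div]
    congr 1
    exact sum_congr rfl fun _ _ => by ring
  rw [hsum, sum_vol_mul_logb_vol_div, H1, neg_div, sum_div]
  congr 1
  exact sum_congr rfl fun _ _ => by ring

lemma H1_sub_HT (T : EncTree V) : H1 G - HT G T = CT G T := by
  rw [H1_eq_HT_add_CT G T, add_sub_cancel_left]

lemma HT_nonneg (T : EncTree V) : 0 ≤ HT G T := by
  refine neg_nonneg.mpr (sum_nonpos fun a ha => mul_nonpos_of_nonneg_of_nonpos
    (div_nonneg (Nat.cast_nonneg _) (vol_nonneg G univ)) (Real.logb_nonpos one_lt_two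
      (div_nonneg (vol_nonneg G _) (vol_nonneg G _)) ?_))
  exact div_le_one_of_le₀ (vol_mono G (T.mark_subset a (mem_filter.mp ha).2)) (vol_nonneg G _)

lemma sSup_H1_sub_HT (P : EncTree V → Prop) (hP : ∃ T, P T) :
    sSup {x | ∃ T, P T ∧ x = H1 G - HT G T} = H1 G - sInf {x | ∃ T, P T ∧ x = HT G T} := by
  obtain ⟨T₀, hT₀⟩ := hP
  have hne : {x | ∃ T, P T ∧ x = HT G T}.Nonempty := ⟨_, T₀, hT₀, rfl⟩
  have hbdd : BddBelow {x | ∃ T, P T ∧ x = HT G T} :=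
    ⟨0, by rintro _ ⟨T, -, rfl⟩; exact HT_nonneg G T⟩
  have himage : {x | ∃ T, P T ∧ x = H1 G - HT G T} =
      (H1 G - ·) '' {x | ∃ T, P T ∧ x = HT G T} := by
    ext x
    simp [eq_comm]
  rw [himage]
  exact (Antitone.map_csInf_of_continuousAt (f := (H1 G - ·)) (by fun_prop)
    (fun _ _ h => sub_le_sub_left h _) hne hbdd).symm

end SiLeM

/-- Compressing and decoding principle:
`D(G) = H¹(G) − H(G) = C(G)`, and for every `k ≥ 2`,
`D^k(G) = H¹(G) − H^k(G) = C^k(G)`. -/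
theorem stmt8 {V : Type} [Fintype V] [DecidableEq V]
    (G : SimpleGraph V) (hconn : G.Connected) :
    SiLeM.DInfo G = SiLeM.H1 G - SiLeM.SE G ∧
    SiLeM.DInfo G = SiLeM.CInfo G ∧
    ∀ k : ℕ, 2 ≤ k →
      SiLeM.Dk G k = SiLeM.H1 G - SiLeM.SEk G k ∧ SiLeM.Dk G k = SiLeM.Ck G k := by
  have : Nonempty V := hconn.nonempty
  obtain ⟨T₀, hT₀⟩ := EncTree.exists_forall_depth_le_one (V := V)
  refine ⟨?_, by simp only [SiLeM.DInfo, SiLeM.CInfo, SiLeM.H1_sub_HT], fun k hk => ⟨?_, ?_⟩⟩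
  · simpa [SiLeM.DInfo, SiLeM.SE] using SiLeM.sSup_H1_sub_HT G (fun _ => True) ⟨T₀, trivial⟩
  · exact SiLeM.sSup_H1_sub_HT G _ ⟨T₀, fun a => (hT₀ a).trans (by omega)⟩
  · simp only [SiLeM.Dk, SiLeM.Ck, SiLeM.H1_sub_HT]
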